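/- Let n be a positive integer with p ∤ n and let α = α_0 + uα_1 + ⋯ + u^{t−1}α_{t−1} ∈ R^t be such that x^n − α_{0,0} is irreducible over F, where α_{0,0} is the unique element of F with α_{0,0}^{p^s} = α_0. Then the image of every nonzero polynomial g ∈ F[x] of degree less than n is invertible in the quotient ring R^t[x]/⟨x^{np^s} − α⟩. -/

import Mathlib

open Polynomial

/-- The finite chain ring `R^t = 𝔽_{p^m}[u]/⟨u^t⟩`. -/
abbrev Rt (p m t : ℕ) [Fact p.Prime] : Type _ :=
  Polynomial (GaloisField p m) ⧸ Ideal.span {(X : Polynomial (GaloisField p m)) ^ t}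

noncomputable instance (p m t : ℕ) [Fact p.Prime] : CommRing (Rt p m t) :=
  Ideal.Quotient.commRing _

/-- The canonical projection `𝔽_{p^m}[u] → R^t`. -/
noncomputable def mkRt (p m t : ℕ) [Fact p.Prime] :
    Polynomial (GaloisField p m) →+* Rt p m t :=
  Ideal.Quotient.mk _

/-- The canonical embedding `𝔽_{p^m} → R^t`. -/
noncomputable def κ (p m t : ℕ) [Fact p.Prime] : GaloisField p m →+* Rt p m t :=
  (mkRt p m t).comp (C : GaloisField p m →+* Polynomial (GaloisField p m))

/-!
Reducing modulo `u` maps `R^t[x]` onto `𝔽[x]` with a nilpotent kernel, and coprimality lifts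
along such maps (a Bézout combination equal to `1` modulo a nilpotent is a unit). Modulo `u`
the modulus becomes `x^{np^s} − α₀ = (xⁿ − α_{0,0})^{p^s}` by the Frobenius, to which `g` is
coprime because it is nonzero of degree less than that of the irreducible `xⁿ − α_{0,0}`.
A polynomial coprime to the modulus is invertible in the quotient.
-/

theorem IsCoprime.of_map_of_ker_le_nilradical {R S : Type*} [CommRing R] [CommRing S]
    {φ : R →+* S} (hφ : Function.Surjective φ) (hker : RingHom.ker φ ≤ nilradical R) {x y : R}
    (h : IsCoprime (φ x) (φ y)) : IsCoprime x y := by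
  obtain ⟨a', b', hab⟩ := h
  obtain ⟨a, rfl⟩ := hφ a'
  obtain ⟨b, rfl⟩ := hφ b'
  have hnil : IsNilpotent (a * x + b * y - 1) := hker (by simp [RingHom.mem_ker, hab])
  obtain ⟨v, hv⟩ := hnil.isUnit_add_one
  rw [sub_add_cancel] at hv
  exact ⟨↑v⁻¹ * a, ↑v⁻¹ * b, by rw [mul_assoc, mul_assoc, ← mul_add, ← hv, Units.inv_mul]⟩

theorem IsCoprime.isUnit_quotient_mk_span_singleton {R : Type*} [CommRing R] {x y : R}
    (h : IsCoprime x y) : IsUnit (Ideal.Quotient.mk (Ideal.span {y}) x) := by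
  obtain ⟨a, b, hab⟩ := h
  refine IsUnit.of_mul_eq_one (Ideal.Quotient.mk _ a) ?_
  rw [← map_mul, ← map_one (Ideal.Quotient.mk _), Ideal.Quotient.eq, Ideal.mem_span_singleton]
  exact ⟨-b, by linear_combination hab⟩

theorem Polynomial.ker_mapRingHom_le_nilradical {R S : Type*} [CommRing R] [CommRing S]
    {φ : R →+* S} (hker : RingHom.ker φ ≤ nilradical R) :
    RingHom.ker (mapRingHom φ) ≤ nilradical R[X] := by
  rw [ker_mapRingHom, Ideal.map_le_iff_le_comap]
  exact fun r hr => mem_nilradical.mpr ((mem_nilradical.mp (hker hr)).map C)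

theorem Polynomial.isCoprime_pow_of_irreducible_of_degree_lt {K : Type*} [Field K]
    {q g : K[X]} (hq : Irreducible q) (hg : g ≠ 0) (hdeg : g.degree < q.degree) (k : ℕ) :
    IsCoprime g (q ^ k) :=
  ((hq.coprime_iff_not_dvd.mpr fun hd => hg (eq_zero_of_dvd_of_degree_lt hd hdeg)).symm).pow_right

namespace Polynomial

variable {K : Type*} [CommRing K] {t : ℕ}

noncomputable def evalZeroModXPow (ht : t ≠ 0) : K[X] ⧸ Ideal.span {(X : K[X]) ^ t} →+* K :=
  Ideal.Quotient.lift _ (evalRingHom 0) fun q hq => by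
    obtain ⟨r, rfl⟩ := Ideal.mem_span_singleton'.mp hq
    simp [zero_pow ht]

@[simp]
theorem evalZeroModXPow_mk (ht : t ≠ 0) (q : K[X]) :
    evalZeroModXPow ht (Ideal.Quotient.mk _ q) = q.eval 0 :=
  rfl

theorem evalZeroModXPow_comp_mk_comp_C (ht : t ≠ 0) :
    (evalZeroModXPow ht).comp ((Ideal.Quotient.mk _).comp C) = RingHom.id K := by
  ext a
  simp

theorem evalZeroModXPow_surjective (ht : t ≠ 0) :
    Function.Surjective (evalZeroModXPow (K := K) ht) :=
  fun a => ⟨Ideal.Quotient.mk _ (C a), by simp⟩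

/-- The kernel is generated by the class of `X`, whose `t`-th power vanishes. -/
theorem ker_evalZeroModXPow_le_nilradical (ht : t ≠ 0) :
    RingHom.ker (evalZeroModXPow (K := K) ht) ≤ nilradical _ := by
  intro x hx
  obtain ⟨q, rfl⟩ := Ideal.Quotient.mk_surjective x
  have hXq : X ∣ q := X_dvd_iff.mpr (by simpa [coeff_zero_eq_eval_zero] using hx)
  refine mem_nilradical.mpr ⟨t, ?_⟩
  rw [← map_pow, Ideal.Quotient.eq_zero_iff_mem, Ideal.mem_span_singleton]
  exact pow_dvd_pow_of_dvd hXq t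

end Polynomial

theorem stmt_3 (p m s t n : ℕ) [Fact p.Prime] (ht : 1 ≤ t)
    (hn : 0 < n)
    (αc : ℕ → GaloisField p m) (α00 : GaloisField p m) (hα00 : α00 ^ p ^ s = αc 0)
    (hirr : Irreducible ((X : Polynomial (GaloisField p m)) ^ n - C α00)) :
    ∀ g : Polynomial (GaloisField p m), g ≠ 0 → g.degree < (n : ℕ) →
      IsUnit (Ideal.Quotient.mk
        (Ideal.span {((X : Polynomial (Rt p m t)) ^ (n * p ^ s) -
          C (mkRt p m t (∑ i ∈ Finset.range t, C (αc i) * X ^ i)))})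
        (g.map (κ p m t))) := by
  intro g hg hdeg
  have ht0 : t ≠ 0 := by omega
  set ε := evalZeroModXPow (K := GaloisField p m) ht0
  have hg_map : (g.map (κ p m t)).map ε = g := by
    have hεκ : ε.comp (κ p m t) = RingHom.id _ := evalZeroModXPow_comp_mk_comp_C ht0
    rw [map_map, hεκ, map_id]
  have hf_map : ((X : Polynomial (Rt p m t)) ^ (n * p ^ s) -
      C (mkRt p m t (∑ i ∈ Finset.range t, C (αc i) * X ^ i))).map ε =
      (X ^ n - C α00) ^ p ^ s := by
    have hα : ε (mkRt p m t (∑ i ∈ Finset.range t, C (αc i) * X ^ i)) = αc 0 := by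
      rw [mkRt, evalZeroModXPow_mk, eval_finsetSum, Finset.sum_eq_single_of_mem 0 (by simpa)]
      · simp
      · intro i _ hi
        simp [zero_pow hi]
    rw [Polynomial.map_sub, Polynomial.map_pow, map_X, map_C, hα, ← hα00, map_pow,
      pow_mul, sub_pow_char_pow]
  refine IsCoprime.isUnit_quotient_mk_span_singleton ?_
  refine IsCoprime.of_map_of_ker_le_nilradical (φ := mapRingHom ε)
    (map_surjective _ (evalZeroModXPow_surjective ht0))
    (ker_mapRingHom_le_nilradical (ker_evalZeroModXPow_le_nilradical ht0)) ?_
  rw [coe_mapRingHom, hg_map, hf_map]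
  exact isCoprime_pow_of_irreducible_of_degree_lt hirr hg (by rwa [degree_X_pow_sub_C hn]) _
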